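/- arXiv:1802.03364 — 2 statements merged into one kernel-verified Lean document; each statement's English description precedes it below -/
import Mathlib

section
/- Let C be a finite collection of nonempty subsets of [n] and w : C → (0,∞) satisfy Σ{w(σ) : i ∈ σ ∈ C} = 1 for every i ∈ [n]. Then for every compact subset K of ℝⁿ, |K| ≤ ∏_{σ∈C} |P_{F_σ}(K)|^{w(σ)}. -/
open MeasureTheory Submodule
open scoped ENNReal

noncomputable def coordSubspace (n : ℕ) (σ : Finset (Fin n)) : Submodule ℝ (EuclideanSpace ℝ (Fin n)) :=
  Submodule.span ℝ ((fun j => EuclideanSpace.single j (1:ℝ)) '' σ)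

noncomputable def projCLM {n : ℕ} (F : Submodule ℝ (EuclideanSpace ℝ (Fin n))) :
    EuclideanSpace ℝ (Fin n) →L[ℝ] EuclideanSpace ℝ (Fin n) :=
  F.subtypeL.comp (orthogonalProjection F)

/-- `d`-dimensional volume of `A ∩ F` computed inside the subspace `F`. -/
noncomputable def svol {n : ℕ} (F : Submodule ℝ (EuclideanSpace ℝ (Fin n)))
    (A : Set (EuclideanSpace ℝ (Fin n))) : ℝ≥0∞ :=
  volume ((stdOrthonormalBasis ℝ F).repr '' ((↑) ⁻¹' A : Set F))

/-- Integral of `f` over the subspace `F` w.r.t. Lebesgue measure induced by the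
Euclidean structure of `F`. -/
noncomputable def subIntegral {n : ℕ} (F : Submodule ℝ (EuclideanSpace ℝ (Fin n)))
    (f : EuclideanSpace ℝ (Fin n) → ℝ) : ℝ :=
  ∫ x : EuclideanSpace ℝ (Fin (Module.finrank ℝ F)),
    f (((stdOrthonormalBasis ℝ F).repr.symm x : F) : EuclideanSpace ℝ (Fin n))

def LogConcave {n : ℕ} (f : EuclideanSpace ℝ (Fin n) → ℝ) : Prop :=
  (∀ x, 0 ≤ f x) ∧ ∀ x y : EuclideanSpace ℝ (Fin n), ∀ t : ℝ, t ∈ Set.Icc (0:ℝ) 1 →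
    f ((1 - t) • x + t • y) ≥ f x ^ (1 - t) * f y ^ t

/-!
Transport `K` to `Fin n → ℝ`. Its indicator is bounded by `∏ σ, 1_{P_σ K}(P_σ x) ^ w σ`, and the
`σ`-th factor depends only on the coordinates in `σ`. Integrating out one coordinate `i` at a time,
Hölder's inequality with the exponents `w σ`, `i ∈ σ`, which sum to `1`, moves that integral inside
the product onto the factors that depend on `i` (Finner's inequality). Once every coordinate is
integrated out, the `σ`-th factor is the `|σ|`-dimensional volume of `P_σ K`.
-/

open Finset Function

section Finner

variable {δ ι : Type*} [DecidableEq δ] {A : δ → Type*} [∀ i, MeasurableSpace (A i)]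
  {μ : ∀ i, Measure (A i)}

theorem DependsOn.lmarginal {f : (∀ i, A i) → ℝ≥0∞} {s : Set δ} (hf : DependsOn f s)
    (t : Finset δ) : DependsOn (∫⋯∫⁻_t, f ∂μ) s := by
  intro x y hxy
  refine lintegral_congr fun z => hf fun i hi => ?_
  simp only [updateFinset_def, hxy i hi]

theorem lmarginal_singleton_prod_rpow_le (C : Finset ι) (σ : ι → Finset δ) {w : ι → ℝ}
    {F : ι → (∀ i, A i) → ℝ≥0∞} (hF : ∀ k ∈ C, Measurable (F k))
    (hdep : ∀ k ∈ C, DependsOn (F k) (σ k)) (hw : ∀ k ∈ C, 0 ≤ w k) {i : δ}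
    (hcov : ∑ k ∈ C with i ∈ σ k, w k = 1) :
    ∫⋯∫⁻_{i}, (fun x => ∏ k ∈ C, F k x ^ w k) ∂μ ≤
      fun x => ∏ k ∈ C, (∫⋯∫⁻_(σ k ∩ {i}), F k ∂μ) x ^ w k := by
  intro x
  have hconst : ∀ k ∈ C, i ∉ σ k → ∀ t, F k (update x i t) = F k x := fun k hk hi t =>
    hdep k hk fun j hj => update_of_ne (ne_of_mem_of_not_mem hj hi) t x
  rw [lmarginal_singleton]
  calc ∫⁻ t, ∏ k ∈ C, F k (update x i t) ^ w k ∂μ i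
      = ∫⁻ t, (∏ k ∈ C with i ∉ σ k, F k x ^ w k) *
          ∏ k ∈ C with i ∈ σ k, F k (update x i t) ^ w k ∂μ i := by
        refine lintegral_congr fun t => ?_
        rw [← prod_filter_not_mul_prod_filter C (i ∈ σ ·)]
        congr 1
        refine prod_congr rfl fun k hk => ?_
        rw [mem_filter] at hk
        rw [hconst k hk.1 hk.2]
    _ = (∏ k ∈ C with i ∉ σ k, F k x ^ w k) *
          ∫⁻ t, ∏ k ∈ C with i ∈ σ k, F k (update x i t) ^ w k ∂μ i :=
        lintegral_const_mul _ <| Finset.measurable_prod _ fun k hk =>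
          ((hF k (mem_filter.1 hk).1).comp (measurable_update x)).pow_const _
    _ ≤ (∏ k ∈ C with i ∉ σ k, F k x ^ w k) *
          ∏ k ∈ C with i ∈ σ k, (∫⁻ t, F k (update x i t) ∂μ i) ^ w k := by
        gcongr
        exact ENNReal.lintegral_prod_norm_pow_le _ (fun k hk =>
          ((hF k (mem_filter.1 hk).1).comp (measurable_update x)).aemeasurable) hcov
          fun k hk => hw k (mem_filter.1 hk).1
    _ = ∏ k ∈ C, (∫⋯∫⁻_(σ k ∩ {i}), F k ∂μ) x ^ w k := by
        rw [← prod_filter_not_mul_prod_filter C (i ∈ σ ·)]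
        congr 1 <;> refine prod_congr rfl fun k hk => ?_ <;> rw [mem_filter] at hk
        · rw [inter_singleton_of_notMem hk.2, lmarginal_empty]
        · rw [inter_singleton_of_mem hk.2, lmarginal_singleton]

variable [∀ i, SigmaFinite (μ i)]

theorem lmarginal_prod_rpow_le (C : Finset ι) (σ : ι → Finset δ) {w : ι → ℝ}
    {F : ι → (∀ i, A i) → ℝ≥0∞} (hF : ∀ k ∈ C, Measurable (F k))
    (hdep : ∀ k ∈ C, DependsOn (F k) (σ k)) (hw : ∀ k ∈ C, 0 ≤ w k) {s : Finset δ}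
    (hcov : ∀ i ∈ s, ∑ k ∈ C with i ∈ σ k, w k = 1) :
    ∫⋯∫⁻_s, (fun x => ∏ k ∈ C, F k x ^ w k) ∂μ ≤
      fun x => ∏ k ∈ C, (∫⋯∫⁻_(σ k ∩ s), F k ∂μ) x ^ w k := by
  induction s using Finset.induction with
  | empty => simp
  | @insert i s hi ih =>
    intro x
    set G : ι → (∀ i, A i) → ℝ≥0∞ := fun k => ∫⋯∫⁻_(σ k ∩ s), F k ∂μ
    have hprod : Measurable fun x => ∏ k ∈ C, F k x ^ w k :=
      Finset.measurable_prod _ fun k hk => (hF k hk).pow_const _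
    calc (∫⋯∫⁻_insert i s, (fun x => ∏ k ∈ C, F k x ^ w k) ∂μ) x
        = ∫⁻ t, (∫⋯∫⁻_s, (fun x => ∏ k ∈ C, F k x ^ w k) ∂μ) (update x i t) ∂μ i :=
          lmarginal_insert _ hprod hi x
      _ ≤ ∫⁻ t, ∏ k ∈ C, G k (update x i t) ^ w k ∂μ i :=
          lintegral_mono fun t => ih (fun j hj => hcov j (mem_insert_of_mem hj)) _
      _ ≤ ∏ k ∈ C, (∫⋯∫⁻_(σ k ∩ {i}), G k ∂μ) x ^ w k := by
          have := lmarginal_singleton_prod_rpow_le (μ := μ) (F := G) C σ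
            (fun k hk => (hF k hk).lmarginal μ)
            (fun k hk => (hdep k hk).lmarginal _) hw (hcov i (mem_insert_self i s)) x
          rwa [lmarginal_singleton] at this
      _ = ∏ k ∈ C, (∫⋯∫⁻_(σ k ∩ insert i s), F k ∂μ) x ^ w k := by
          refine prod_congr rfl fun k hk => ?_
          have hdisj : Disjoint (σ k ∩ {i}) (σ k ∩ s) :=
            disjoint_of_subset_left inter_subset_right
              (disjoint_singleton_left.2 fun h => hi (mem_inter.1 h).2)
          rw [insert_eq, inter_union_distrib_left, lmarginal_union μ _ (hF k hk) hdisj]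

theorem lintegral_prod_rpow_le_prod_lmarginal [Fintype δ] (C : Finset ι) (σ : ι → Finset δ)
    {w : ι → ℝ} {F : ι → (∀ i, A i) → ℝ≥0∞} (hF : ∀ k ∈ C, Measurable (F k))
    (hdep : ∀ k ∈ C, DependsOn (F k) (σ k)) (hw : ∀ k ∈ C, 0 ≤ w k)
    (hcov : ∀ i, ∑ k ∈ C with i ∈ σ k, w k = 1) (x : ∀ i, A i) :
    ∫⁻ y, ∏ k ∈ C, F k y ^ w k ∂Measure.pi μ ≤
      ∏ k ∈ C, (∫⋯∫⁻_(σ k), F k ∂μ) x ^ w k := by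
  simpa only [← lintegral_eq_lmarginal_univ, inter_univ] using
    lmarginal_prod_rpow_le (μ := μ) C σ hF hdep hw (s := univ) (fun i _ => hcov i) x

end Finner

section CoordSubspace

variable {n : ℕ} (σ : Finset (Fin n))

open scoped Classical in
theorem span_image_basisFun_eq_coordSubspace :
    span ℝ (σ.image (EuclideanSpace.basisFun (Fin n) ℝ) : Set (EuclideanSpace ℝ (Fin n))) =
      coordSubspace n σ := by
  simp [coordSubspace, EuclideanSpace.basisFun_apply]

open scoped Classical in
noncomputable def coordSubspaceBasis : OrthonormalBasis σ ℝ (coordSubspace n σ) :=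
  (OrthonormalBasis.span (EuclideanSpace.basisFun (Fin n) ℝ).orthonormal σ).map
    (LinearIsometryEquiv.ofEq _ _ (span_image_basisFun_eq_coordSubspace σ))

theorem coordSubspaceBasis_apply (j : σ) :
    (coordSubspaceBasis σ j : EuclideanSpace ℝ (Fin n)) = EuclideanSpace.single (j : Fin n) 1 := by
  classical
  simp [coordSubspaceBasis, OrthonormalBasis.span_apply]

theorem sum_smul_coordSubspaceBasis (y : σ → ℝ) :
    ∑ j, y j • (coordSubspaceBasis σ j : EuclideanSpace ℝ (Fin n)) =
      WithLp.toLp 2 (updateFinset (0 : Fin n → ℝ) σ y) := by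
  ext i
  simp only [WithLp.ofLp_sum, WithLp.ofLp_smul, coordSubspaceBasis_apply, Finset.sum_apply,
    Pi.smul_apply, PiLp.ofLp_single, Pi.single_apply, smul_eq_mul, mul_ite, mul_one, mul_zero,
    updateFinset_def]
  by_cases hi : i ∈ σ
  · rw [dif_pos hi, Fintype.sum_eq_single ⟨i, hi⟩ fun j hj =>
      if_neg fun h => hj (Subtype.ext h.symm), if_pos rfl]
  · rw [dif_neg hi]
    exact Finset.sum_eq_zero fun j _ => if_neg fun h : i = j => hi (h ▸ j.2)

theorem coordSubspaceBasis_repr_symm_toLp (y : σ → ℝ) :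
    ((coordSubspaceBasis σ).repr.symm (WithLp.toLp 2 y) : EuclideanSpace ℝ (Fin n)) =
      WithLp.toLp 2 (updateFinset (0 : Fin n → ℝ) σ y) := by
  rw [← OrthonormalBasis.sum_repr_symm, Submodule.coe_sum]
  simpa only [Submodule.coe_smul] using sum_smul_coordSubspaceBasis σ y

theorem projCLM_coordSubspace_toLp (x : Fin n → ℝ) :
    projCLM (coordSubspace n σ) (WithLp.toLp 2 x) =
      WithLp.toLp 2 (updateFinset (0 : Fin n → ℝ) σ (σ.restrict x)) := by
  rw [← sum_smul_coordSubspaceBasis, projCLM, ContinuousLinearMap.comp_apply,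
    OrthonormalBasis.orthogonalProjectionOnto_apply_eq_sum (coordSubspaceBasis σ)]
  simp [coordSubspaceBasis_apply, EuclideanSpace.inner_single_left]

theorem dependsOn_projCLM_coordSubspace_toLp :
    DependsOn (fun x : Fin n → ℝ => projCLM (coordSubspace n σ) (WithLp.toLp 2 x)) σ := by
  intro x y hxy
  simp only [projCLM_coordSubspace_toLp, show σ.restrict x = σ.restrict y from
    funext fun i => hxy i i.2]

theorem svol_eq_volume_preimage_coe (F : Submodule ℝ (EuclideanSpace ℝ (Fin n)))
    (A : Set (EuclideanSpace ℝ (Fin n))) : svol F A = volume ((↑) ⁻¹' A : Set F) := by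
  rw [svol, LinearIsometryEquiv.image_eq_preimage_symm]
  exact (stdOrthonormalBasis ℝ F).measurePreserving_measurableEquiv.symm.measure_preimage_equiv _

theorem svol_coordSubspace (A : Set (EuclideanSpace ℝ (Fin n))) :
    svol (coordSubspace n σ) A =
      volume ((fun y : σ → ℝ => WithLp.toLp 2 (updateFinset (0 : Fin n → ℝ) σ y)) ⁻¹' A) := by
  have hpres := (EuclideanSpace.volume_preserving_symm_measurableEquiv_toLp σ).symm.trans
    (coordSubspaceBasis σ).measurePreserving_measurableEquiv.symm
  rw [svol_eq_volume_preimage_coe, ← hpres.measure_preimage_equiv]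
  congr 1
  ext y
  exact Iff.of_eq (congrArg (· ∈ A) (coordSubspaceBasis_repr_symm_toLp σ y))

theorem lmarginal_indicator_projCLM_coordSubspace {A : Set (EuclideanSpace ℝ (Fin n))}
    (hA : MeasurableSet A) :
    (∫⋯∫⁻_σ, (fun x => A.indicator 1 (projCLM (coordSubspace n σ) (WithLp.toLp 2 x)))) 0 =
      svol (coordSubspace n σ) A := by
  have hmeas : Measurable fun y : σ → ℝ => WithLp.toLp 2 (updateFinset (0 : Fin n → ℝ) σ y) := by
    fun_prop
  rw [svol_coordSubspace, ← lintegral_indicator_one (hmeas hA), volume_pi]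
  refine lintegral_congr fun y => ?_
  simp only [projCLM_coordSubspace_toLp, restrict_updateFinset]
  rfl

end CoordSubspace

theorem weighted_cover_inequality_general (n : ℕ) (C : Finset (Finset (Fin n)))
    (w : Finset (Fin n) → ℝ) (hw : ∀ σ ∈ C, 0 < w σ)
    (hcov : ∀ i : Fin n, ∑ σ ∈ C.filter (fun σ => i ∈ σ), w σ = 1)
    (K : Set (EuclideanSpace ℝ (Fin n))) (hK : IsCompact K) :
    volume K ≤ ∏ σ ∈ C, svol (coordSubspace n σ) (projCLM (coordSubspace n σ) '' K) ^ (w σ) := by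
  set P := fun σ => projCLM (coordSubspace n σ)
  have hPK : ∀ σ, MeasurableSet (P σ '' K) := fun σ =>
    (hK.image (P σ).continuous).measurableSet
  set F : Finset (Fin n) → (Fin n → ℝ) → ℝ≥0∞ :=
    fun σ x => (P σ '' K).indicator 1 (P σ (WithLp.toLp 2 x))
  have hF : ∀ σ ∈ C, Measurable (F σ) := fun σ _ =>
    (measurable_one.indicator (hPK σ)).comp (by fun_prop)
  have hdep : ∀ σ ∈ C, DependsOn (F σ) σ := fun σ _ x y hxy =>
    congrArg ((P σ '' K).indicator 1) (dependsOn_projCLM_coordSubspace_toLp σ hxy)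
  have hK_le : ∀ x, (WithLp.toLp 2 ⁻¹' K).indicator 1 x ≤ ∏ σ ∈ C, F σ x ^ w σ := by
    intro x
    by_cases hx : WithLp.toLp 2 x ∈ K
    · have hF_one : ∀ σ, F σ x = 1 := fun σ =>
        Set.indicator_of_mem (Set.mem_image_of_mem _ hx) _
      simp [hx, hF_one]
    · simp [hx]
  calc volume K = ∫⁻ x : Fin n → ℝ, (WithLp.toLp 2 ⁻¹' K).indicator 1 x := by
        rw [lintegral_indicator_one (hK.measurableSet.preimage (by fun_prop)),
          (PiLp.volume_preserving_toLp (Fin n)).measure_preimage hK.measurableSet.nullMeasurableSet]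
    _ ≤ ∫⁻ x, ∏ σ ∈ C, F σ x ^ w σ := lintegral_mono hK_le
    _ ≤ ∏ σ ∈ C, (∫⋯∫⁻_σ, F σ) 0 ^ w σ := by
        rw [volume_pi]
        exact lintegral_prod_rpow_le_prod_lmarginal C id hF hdep (fun σ hσ => (hw σ hσ).le) hcov 0
    _ = ∏ σ ∈ C, svol (coordSubspace n σ) (P σ '' K) ^ w σ :=
        prod_congr rfl fun σ _ => by rw [lmarginal_indicator_projCLM_coordSubspace σ (hPK σ)]

theorem weighted_cover_inequality (n : ℕ) (C : Finset (Finset (Fin n)))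
    (hne : ∀ σ ∈ C, σ.Nonempty)
    (w : Finset (Fin n) → ℝ) (hw : ∀ σ ∈ C, 0 < w σ)
    (hcov : ∀ i : Fin n, ∑ σ ∈ C.filter (fun σ => i ∈ σ), w σ = 1)
    (K : Set (EuclideanSpace ℝ (Fin n))) (hK : IsCompact K) :
    volume K ≤ ∏ σ ∈ C, svol (coordSubspace n σ) (projCLM (coordSubspace n σ) '' K) ^ (w σ) :=
  weighted_cover_inequality_general n C w hw hcov K hK
end

section
/- Let f : ℝⁿ → [0,∞) be log-concave with f(0) = 1, and let F₁,…,F_r be subspaces with dim F_i = d_i and weights c_i > 0 satisfying s·I_n = Σ c_i P_i. If z = Σ_{i=1}^r (c_i/s) x_i with x_i ∈ F_i, then f(z/n)ⁿ ≥ ∏_{i=1}^r f(x_i)^{c_i/s}. -/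
open MeasureTheory Submodule
open scoped ENNReal

/-!
Taking traces in `s • id = ∑ cᵢ Pᵢ` gives `∑ cᵢ dᵢ = s n`, so the weights `cᵢ dᵢ / (s n)` form a
probability vector and `z / n = ∑ (cᵢ dᵢ / (s n)) (xᵢ / dᵢ)`. Log-concavity applied to this convex
combination bounds `f (z / n) ^ n` below by `∏ f (xᵢ / dᵢ) ^ (cᵢ dᵢ / s)`, and log-concavity on the
segment from `0` to `xᵢ` (where `f 0 = 1`) gives `f (xᵢ / dᵢ) ≥ f xᵢ ^ (1 / dᵢ)`.
-/

open Module

lemma trace_projCLM {n : ℕ} (F : Submodule ℝ (EuclideanSpace ℝ (Fin n))) :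
    LinearMap.trace ℝ _ (projCLM F).toLinearMap = finrank ℝ F := by
  change LinearMap.trace ℝ _ (F.subtype ∘ₗ F.orthogonalProjectionOnto.toLinearMap) = _
  rw [LinearMap.trace_comp_comm']
  have hretract : F.orthogonalProjectionOnto.toLinearMap ∘ₗ F.subtype = LinearMap.id := by
    ext v
    simp
  rw [hretract, LinearMap.trace_id]

lemma mul_finrank_eq_sum_of_smul_id_eq_sum_projCLM {n : ℕ} {ι : Type*} [Fintype ι]
    {s : ℝ} {c : ι → ℝ} {F : ι → Submodule ℝ (EuclideanSpace ℝ (Fin n))}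
    (hdecomp : s • ContinuousLinearMap.id ℝ (EuclideanSpace ℝ (Fin n)) =
      ∑ i, c i • projCLM (F i)) :
    s * n = ∑ i, c i * finrank ℝ (F i) := by
  have := congrArg (fun T : EuclideanSpace ℝ (Fin n) →L[ℝ] EuclideanSpace ℝ (Fin n) =>
    LinearMap.trace ℝ _ T.toLinearMap) hdecomp
  simpa [trace_projCLM, finrank_euclideanSpace_fin] using this

lemma smul_inv_finrank_smul_of_mem {E : Type*} [AddCommGroup E] [Module ℝ E]
    [FiniteDimensional ℝ E]
    {F : Submodule ℝ E} {x : E} (hx : x ∈ F) :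
    (finrank ℝ F : ℝ) • (finrank ℝ F : ℝ)⁻¹ • x = x := by
  rcases (finrank ℝ F).eq_zero_or_pos with hd | hd
  · simp [(Submodule.mem_bot ℝ).1 (Submodule.finrank_eq_zero.1 hd ▸ hx)]
  · rw [smul_smul, mul_inv_cancel₀ (by positivity), one_smul]

namespace LogConcave

variable {n : ℕ} {f : EuclideanSpace ℝ (Fin n) → ℝ}

lemma rpow_mul_rpow_le (hf : LogConcave f) {a b : ℝ} (ha : 0 ≤ a) (hb : 0 ≤ b) (hab : a + b = 1)
    (x y : EuclideanSpace ℝ (Fin n)) :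
    f x ^ a * f y ^ b ≤ f (a • x + b • y) := by
  obtain rfl : a = 1 - b := by linarith
  exact hf.2 x y b ⟨hb, by linarith⟩

lemma convex_setOf_pos (hf : LogConcave f) : Convex ℝ {v | 0 < f v} := by
  intro a ha b hb ta tb hta htb htab
  exact (mul_pos (Real.rpow_pos_of_pos ha ta) (Real.rpow_pos_of_pos hb tb)).trans_le
    (hf.rpow_mul_rpow_le hta htb htab a b)

lemma concaveOn_log (hf : LogConcave f) :
    ConcaveOn ℝ {v | 0 < f v} (fun v => Real.log (f v)) := by
  refine ⟨hf.convex_setOf_pos, fun a (ha : 0 < f a) b (hb : 0 < f b) ta tb hta htb htab => ?_⟩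
  calc ta • Real.log (f a) + tb • Real.log (f b) = Real.log (f a ^ ta * f b ^ tb) := by
        rw [Real.log_mul (by positivity) (by positivity), Real.log_rpow ha, Real.log_rpow hb,
          smul_eq_mul, smul_eq_mul]
    _ ≤ Real.log (f (ta • a + tb • b)) :=
        Real.log_le_log (by positivity) (hf.rpow_mul_rpow_le hta htb htab a b)

lemma prod_rpow_le_apply_sum (hf : LogConcave f) {ι : Type*} {t : Finset ι} {w : ι → ℝ}
    {y : ι → EuclideanSpace ℝ (Fin n)} (hw₀ : ∀ i ∈ t, 0 ≤ w i) (hw₁ : ∑ i ∈ t, w i = 1)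
    (hy : ∀ i ∈ t, 0 < f (y i)) :
    ∏ i ∈ t, f (y i) ^ w i ≤ f (∑ i ∈ t, w i • y i) := by
  have hjensen := hf.concaveOn_log.le_map_sum hw₀ hw₁ hy
  have hcenter : 0 < f (∑ i ∈ t, w i • y i) := hf.convex_setOf_pos.sum_mem hw₀ hw₁ hy
  calc ∏ i ∈ t, f (y i) ^ w i = Real.exp (∑ i ∈ t, w i • Real.log (f (y i))) := by
        rw [Real.exp_sum]
        refine Finset.prod_congr rfl fun i hi => ?_
        rw [Real.rpow_def_of_pos (hy i hi), smul_eq_mul, mul_comm]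
    _ ≤ Real.exp (Real.log (f (∑ i ∈ t, w i • y i))) := Real.exp_le_exp.2 hjensen
    _ = f (∑ i ∈ t, w i • y i) := Real.exp_log hcenter

lemma prod_rpow_le_apply_inv_smul_sum_pow (hf : LogConcave f) {ι : Type*} {t : Finset ι}
    {e : ι → ℝ} {y : ι → EuclideanSpace ℝ (Fin n)} {m : ℕ} (hm : 0 < m)
    (he₀ : ∀ i ∈ t, 0 ≤ e i) (he : ∑ i ∈ t, e i = m) (hy : ∀ i ∈ t, 0 < f (y i)) :
    ∏ i ∈ t, f (y i) ^ e i ≤ f ((m : ℝ)⁻¹ • ∑ i ∈ t, e i • y i) ^ m := by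
  have hm : (m : ℝ) ≠ 0 := Nat.cast_ne_zero.2 hm.ne'
  have hw₁ : ∑ i ∈ t, e i / m = 1 := by rw [← Finset.sum_div, he, div_self hm]
  calc ∏ i ∈ t, f (y i) ^ e i = (∏ i ∈ t, f (y i) ^ (e i / m)) ^ m := by
        rw [← Finset.prod_pow]
        refine Finset.prod_congr rfl fun i _ => ?_
        rw [← Real.rpow_natCast, ← Real.rpow_mul (hf.1 _), div_mul_cancel₀ _ hm]
    _ ≤ f (∑ i ∈ t, (e i / m) • y i) ^ m :=
        pow_le_pow_left₀ (Finset.prod_nonneg fun i _ => Real.rpow_nonneg (hf.1 _) _)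
          (hf.prod_rpow_le_apply_sum (fun i hi => div_nonneg (he₀ i hi) (Nat.cast_nonneg m))
            hw₁ hy) m
    _ = f ((m : ℝ)⁻¹ • ∑ i ∈ t, e i • y i) ^ m := by
        simp only [Finset.smul_sum, div_eq_inv_mul, mul_smul]

lemma rpow_le_apply_smul (hf : LogConcave f) (hf0 : f 0 = 1) {t : ℝ} (ht : t ∈ Set.Icc 0 1)
    (x : EuclideanSpace ℝ (Fin n)) :
    f x ^ t ≤ f (t • x) := by
  simpa [hf0] using hf.2 0 x t ht

lemma rpow_le_rpow_inv_finrank_smul (hf : LogConcave f) (hf0 : f 0 = 1)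
    {F : Submodule ℝ (EuclideanSpace ℝ (Fin n))} {x : EuclideanSpace ℝ (Fin n)} (hx : x ∈ F)
    {a : ℝ} (ha : 0 ≤ a) :
    f x ^ a ≤ f ((finrank ℝ F : ℝ)⁻¹ • x) ^ (a * finrank ℝ F) := by
  set d : ℝ := (finrank ℝ F : ℝ)
  rcases (finrank ℝ F).eq_zero_or_pos with hd | hd
  · have hx0 : x = 0 := by simpa [Submodule.finrank_eq_zero.1 hd] using hx
    simp [hx0, hf0]
  have hd : 0 < d := Nat.cast_pos.2 hd
  have ht : d⁻¹ ∈ Set.Icc (0 : ℝ) 1 := ⟨by positivity, Nat.cast_inv_le_one _⟩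
  calc f x ^ a = (f x ^ d⁻¹) ^ (a * d) := by
        rw [← Real.rpow_mul (hf.1 x)]
        field_simp
    _ ≤ f (d⁻¹ • x) ^ (a * d) :=
        Real.rpow_le_rpow (by positivity [hf.1 x]) (hf.rpow_le_apply_smul hf0 ht x)
          (by positivity)

end LogConcave

theorem pointwise_log_concave_inequality (n r : ℕ) (s : ℝ) (hs : 0 < s)
    (f : EuclideanSpace ℝ (Fin n) → ℝ) (hf : LogConcave f) (hf0 : f 0 = 1)
    (F : Fin r → Submodule ℝ (EuclideanSpace ℝ (Fin n)))
    (c : Fin r → ℝ) (hc : ∀ i, 0 < c i)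
    (hdecomp : s • (ContinuousLinearMap.id ℝ (EuclideanSpace ℝ (Fin n))) =
      ∑ i : Fin r, c i • projCLM (F i))
    (x : Fin r → EuclideanSpace ℝ (Fin n)) (hx : ∀ i, x i ∈ F i)
    (z : EuclideanSpace ℝ (Fin n)) (hz : z = ∑ i : Fin r, (c i / s) • x i) :
    f ((n : ℝ)⁻¹ • z) ^ n ≥ ∏ i : Fin r, f (x i) ^ (c i / s) := by
  subst hz
  rcases n.eq_zero_or_pos with rfl | hn
  · simp [Subsingleton.elim (x _) 0, hf0]
  by_cases hpos : ∀ i, 0 < f (x i)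
  swap
  · obtain ⟨i, hi⟩ := not_forall.1 hpos
    rw [Finset.prod_eq_zero (Finset.mem_univ i) (by
      rw [le_antisymm (not_lt.1 hi) (hf.1 _), Real.zero_rpow (div_pos (hc i) hs).ne'])]
    exact pow_nonneg (hf.1 _) n
  set d : Fin r → ℝ := fun i => finrank ℝ (F i)
  set e : Fin r → ℝ := fun i => c i / s * d i
  set y : Fin r → EuclideanSpace ℝ (Fin n) := fun i => (d i)⁻¹ • x i
  have he : ∑ i, e i = n := by
    simp only [e, d, div_mul_eq_mul_div, ← Finset.sum_div,
      ← mul_finrank_eq_sum_of_smul_id_eq_sum_projCLM hdecomp, mul_div_cancel_left₀ _ hs.ne']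
  have hcomb : ∑ i, e i • y i = ∑ i, (c i / s) • x i :=
    Finset.sum_congr rfl fun i _ => by rw [mul_smul, smul_inv_finrank_smul_of_mem (hx i)]
  have hy : ∀ i, 0 < f (y i) := fun i =>
    (Real.rpow_pos_of_pos (hpos i) _).trans_le <| hf.rpow_le_apply_smul hf0
      ⟨by positivity, Nat.cast_inv_le_one _⟩ (x i)
  calc ∏ i, f (x i) ^ (c i / s) ≤ ∏ i, f (y i) ^ e i :=
        Finset.prod_le_prod (fun i _ => Real.rpow_nonneg (hf.1 _) _)
          fun i _ => hf.rpow_le_rpow_inv_finrank_smul hf0 (hx i) (div_pos (hc i) hs).le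
    _ ≤ f ((n : ℝ)⁻¹ • ∑ i, e i • y i) ^ n :=
        hf.prod_rpow_le_apply_inv_smul_sum_pow hn
          (fun i _ => mul_nonneg (div_pos (hc i) hs).le (Nat.cast_nonneg _)) he fun i _ => hy i
    _ = f ((n : ℝ)⁻¹ • ∑ i, (c i / s) • x i) ^ n := by rw [hcomb]
end
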